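/- Let λ be a Lyndon word with r = |λ|, and let F = run(λ,e,α,β) and F' = run(λ,e',α',β') with e, e' ≥ 2, 0 ≤ α, β, α', β' < r. If e = e', then F is a unique substring of F' (|Occ(F,F')| = 1) if and only if α ≤ α' and β ≤ β'; otherwise F does not occur in F' (|Occ(F,F')| = 0). -/

import Mathlib

/-- `e`-fold concatenation of the string `l` with itself. -/
def listPow {α : Type*} (l : List α) : ℕ → List α
  | 0 => []
  | n + 1 => l ++ listPow l n

/-- `run λ e α β = P · λ^e · T` where `P` is the suffix of `λ` of length `α`
and `T` is the prefix of `λ` of length `β`. -/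
def runWord {α : Type*} (lam : List α) (e a b : ℕ) : List α :=
  lam.drop (lam.length - a) ++ listPow lam e ++ lam.take b

/-- The set of occurrences of `F` in `F'`: positions `i` with
`0 ≤ i ≤ |F'| − |F|` and `F = F'[i..i+|F|)`. -/
def occ {α : Type*} [DecidableEq α] (F F' : List α) : Finset ℕ :=
  (Finset.range (F'.length + 1)).filter
    (fun i => i + F.length ≤ F'.length ∧ (F'.drop i).take F.length = F)

/-- A Lyndon word: a nonempty string lexicographically strictly smaller than
every proper nonempty suffix of itself. -/
def IsLyndon {α : Type*} [LinearOrder α] (l : List α) : Prop :=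
  l ≠ [] ∧ ∀ i, 0 < i → i < l.length → l < l.drop i

lemma listPow_length {α : Type*} (l : List α) (n : ℕ) :
    (listPow l n).length = n * l.length := by
  induction n with
  | zero => simp [listPow]
  | succ n ih => simp [listPow, ih]; ring

lemma listPow_succ {α : Type*} (l : List α) (n : ℕ) :
    listPow l (n + 1) = l ++ listPow l n := rfl

lemma listPow_succ' {α : Type*} (l : List α) (n : ℕ) :
    listPow l (n + 1) = listPow l n ++ l := by
  induction n with
  | zero => simp [listPow]
  | succ n ih =>
    calc listPow l (n+1+1) = l ++ listPow l (n+1) := rfl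
      _ = l ++ (listPow l n ++ l) := by rw [ih]
      _ = (l ++ listPow l n) ++ l := (List.append_assoc _ _ _).symm
      _ = listPow l (n+1) ++ l := rfl

lemma drop_listPow {α : Type*} (l : List α) (n q : ℕ) (h : q ≤ n) :
    (listPow l n).drop (q * l.length) = listPow l (n - q) := by
  induction q with
  | zero => simp
  | succ q ih =>
    have h1 : q ≤ n := by omega
    have := ih h1
    obtain ⟨m, hm⟩ : ∃ m, n - q = m + 1 := ⟨n - q - 1, by omega⟩
    rw [show (q+1) * l.length = q * l.length + l.length by ring, ← List.drop_drop, this, hm,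
      listPow]
    rw [List.drop_append_of_le_length le_rfl]
    simp [show n - (q+1) = m by omega]

lemma lt_append_of_ne_nil {α : Type*} [LinearOrder α] (l t : List α) (ht : t ≠ []) :
    l < l ++ t := by
  induction l with
  | nil =>
    cases t with
    | nil => exact absurd rfl ht
    | cons a t => exact List.nil_lt_cons a t
  | cons a l ih =>
    show List.Lex _ _ _
    exact List.Lex.cons ih

/-- A Lyndon word occurs in its own powers only at multiples of its length. -/
lemma lyndon_occ_pow {α : Type*} [LinearOrder α] {l : List α} (hl : IsLyndon l) {n p : ℕ}
    (hle : p + l.length ≤ n * l.length)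
    (hocc : ((listPow l n).drop p).take l.length = l) : l.length ∣ p := by
  have hrpos : 0 < l.length := List.length_pos_iff.mpr hl.1
  by_contra hnd
  obtain ⟨q, s, hpqs, hsr⟩ : ∃ q s, p = q * l.length + s ∧ s < l.length :=
    ⟨p / l.length, p % l.length, by rw [Nat.mul_comm]; exact (Nat.div_add_mod p l.length).symm,
      Nat.mod_lt _ hrpos⟩
  have hspos : 0 < s := by
    rcases Nat.eq_zero_or_pos s with h | h
    · subst h
      exact absurd ⟨q, by rw [hpqs]; ring⟩ hnd
    · exact h
  have hq2 : q + 2 ≤ n := by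
    by_contra hcon
    have hqn : n ≤ q + 1 := by omega
    have h3 : n * l.length ≤ (q+1) * l.length := Nat.mul_le_mul hqn (le_refl _)
    have h4 : (q+1) * l.length = q * l.length + l.length := by ring
    omega
  obtain ⟨m, hm⟩ : ∃ m, n - q = m + 2 := ⟨n - q - 2, by omega⟩
  have hdrop : (listPow l n).drop p = l.drop s ++ (l ++ listPow l m) := by
    rw [hpqs, ← List.drop_drop, drop_listPow l n q (by omega), hm]
    show (l ++ (l ++ listPow l m)).drop s = _
    rw [List.drop_append_of_le_length (by omega)]
  have hrot : l = l.drop s ++ l.take s := by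
    conv_lhs => rw [← hocc]
    rw [hdrop, List.take_append]
    have h1 : (l.drop s).length = l.length - s := by simp
    rw [List.take_of_length_le (l := l.drop s) (by rw [h1]; omega), h1,
      show l.length - (l.length - s) = s by omega,
      List.take_append_of_le_length (by omega)]
  have h4 := congrArg (List.drop (l.length - s)) hrot
  rw [List.drop_append] at h4
  have h5 : (l.drop s).drop (l.length - s) = [] := by
    apply List.drop_eq_nil_of_le
    rw [List.length_drop]
  have h6 : (l.length - s) - (l.drop s).length = 0 := by
    rw [List.length_drop]; omega
  rw [h5, h6, List.drop_zero, List.nil_append] at h4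
  have h2 : l < l.drop (l.length - s) := hl.2 (l.length - s) (by omega) (by omega)
  rw [h4] at h2
  have h3 : l.take s < l := by
    conv_rhs => rw [← List.take_append_drop s l]
    refine lt_append_of_ne_nil _ _ ?_
    intro hnil
    have := congrArg List.length hnil
    simp at this
    omega
  exact absurd (h2.trans h3) (lt_irrefl l)

lemma runWord_eq_take_drop {α : Type*} (lam : List α) (e a b : ℕ)
    (ha : a ≤ lam.length) (hb : b ≤ lam.length) :
    runWord lam e a b =
      ((listPow lam (e+2)).drop (lam.length - a)).take (a + e * lam.length + b) := by
  have hpow : listPow lam (e+2) = lam ++ (listPow lam e ++ lam) := by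
    rw [show e + 2 = (e+1) + 1 from rfl, listPow_succ']
    show (lam ++ listPow lam e) ++ lam = _
    rw [List.append_assoc]
  have h1 : (lam.drop (lam.length - a)).length = a := by
    rw [List.length_drop]; omega
  rw [hpow, List.drop_append_of_le_length (by omega),
    show a + e * lam.length + b = (lam.drop (lam.length - a)).length + (e * lam.length + b) by
      rw [h1]; omega,
    List.take_length_add_append,
    show e * lam.length + b = (listPow lam e).length + b by rw [listPow_length],
    List.take_length_add_append]
  show lam.drop (lam.length - a) ++ listPow lam e ++ lam.take b = _
  rw [List.append_assoc]

lemma runWord_length {α : Type*} (lam : List α) (e a b : ℕ)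
    (ha : a ≤ lam.length) (hb : b ≤ lam.length) :
    (runWord lam e a b).length = a + e * lam.length + b := by
  simp [runWord, listPow_length]
  omega

theorem run_substring_case_eq {α : Type*} [LinearOrder α]
    (lam : List α) (hlyn : IsLyndon lam) (r : ℕ) (hr : r = lam.length)
    (e e' a b a' b' : ℕ) (he : 2 ≤ e) (he' : 2 ≤ e')
    (ha : a < r) (hb : b < r) (ha' : a' < r) (hb' : b' < r)
    (hcase : e = e') :
    ((occ (runWord lam e a b) (runWord lam e' a' b')).card = 1 ↔
      a ≤ a' ∧ b ≤ b') ∧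
    (¬(a ≤ a' ∧ b ≤ b') →
      (occ (runWord lam e a b) (runWord lam e' a' b')).card = 0) := by
  subst hcase
  subst hr
  have hrpos : 0 < lam.length := List.length_pos_iff.mpr hlyn.1
  have hE2 : 2 * lam.length ≤ e * lam.length := Nat.mul_le_mul he (le_refl _)
  have hmul : (e + 2) * lam.length = e * lam.length + 2 * lam.length := by ring
  set F := runWord lam e a b with hFdef
  set F' := runWord lam e a' b' with hF'def
  have hF : F = ((listPow lam (e+2)).drop (lam.length - a)).take (a + e * lam.length + b) :=
    runWord_eq_take_drop lam e a b (by omega) (by omega)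
  have hF' : F' = ((listPow lam (e+2)).drop (lam.length - a')).take (a' + e * lam.length + b') :=
    runWord_eq_take_drop lam e a' b' (by omega) (by omega)
  have hlenF : F.length = a + e * lam.length + b := runWord_length lam e a b (by omega) (by omega)
  have hlenF' : F'.length = a' + e * lam.length + b' :=
    runWord_length lam e a' b' (by omega) (by omega)
  have hmem : ∀ i, i ∈ occ F F' ↔
      (i + F.length ≤ F'.length ∧ (F'.drop i).take F.length = F) := by
    intro i
    constructor
    · intro h
      exact (Finset.mem_filter.mp h).2
    · intro h
      exact Finset.mem_filter.mpr ⟨Finset.mem_range.mpr (by omega), h⟩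
  have key : ∀ i, i ∈ occ F F' → a ≤ a' ∧ b ≤ b' ∧ i = a' - a := by
    intro i hi
    obtain ⟨hle, hmatch⟩ := (hmem i).mp hi
    have hiab : i + a + b ≤ a' + b' := by omega
    have h1 : (F'.drop (i + a)).take lam.length = lam := by
      have hcg := congrArg (fun t => (t.drop a).take lam.length) hmatch
      rw [List.drop_take, List.drop_drop, List.take_take, min_eq_left (by omega)] at hcg
      rw [hcg, hF, List.drop_take, List.drop_drop, List.take_take, min_eq_left (by omega),
        show lam.length - a + a = 1 * lam.length by omega,
        drop_listPow lam (e+2) 1 (by omega)]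
      show (lam ++ listPow lam (e+1-1)).take lam.length = lam
      rw [List.take_append_of_le_length le_rfl, List.take_length]
    have h2 : ((listPow lam (e+2)).drop ((lam.length - a') + (i + a))).take lam.length = lam := by
      rw [hF', List.drop_take, List.drop_drop, List.take_take, min_eq_left (by omega)] at h1
      exact h1
    have hdvd : lam.length ∣ ((lam.length - a') + (i + a)) :=
      lyndon_occ_pow hlyn (by omega) h2
    obtain ⟨k, hk⟩ := hdvd
    have hk1 : k = 1 := by
      by_contra hkne
      rcases Nat.lt_or_ge k 2 with h | h
      · have hk0 : k = 0 := by omega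
        rw [hk0, Nat.mul_zero] at hk
        omega
      · have : lam.length * 2 ≤ lam.length * k := Nat.mul_le_mul (le_refl _) h
        omega
    rw [hk1, Nat.mul_one] at hk
    refine ⟨by omega, by omega, by omega⟩
  have pos : a ≤ a' → b ≤ b' → (a' - a) ∈ occ F F' := by
    intro haa hbb
    refine (hmem _).mpr ⟨by omega, ?_⟩
    rw [hlenF, hF', List.drop_take, List.drop_drop, List.take_take,
      show lam.length - a' + (a' - a) = lam.length - a by omega,
      min_eq_left (by omega), ← hF]
  constructor
  · constructor
    · intro hcard
      obtain ⟨i, hi⟩ := Finset.card_eq_one.mp hcard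
      have hmemi : i ∈ occ F F' := hi ▸ Finset.mem_singleton_self i
      obtain ⟨h1, h2, _⟩ := key i hmemi
      exact ⟨h1, h2⟩
    · rintro ⟨haa, hbb⟩
      have hset : occ F F' = {a' - a} :=
        Finset.eq_singleton_iff_unique_mem.mpr ⟨pos haa hbb, fun i hi => (key i hi).2.2⟩
      rw [hset, Finset.card_singleton]
  · intro hcon
    have hset : occ F F' = ∅ := by
      apply Finset.eq_empty_of_forall_notMem
      intro i hi
      obtain ⟨h1, h2, _⟩ := key i hi
      exact hcon ⟨h1, h2⟩
    rw [hset, Finset.card_empty]
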